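/- Let FG_X be the free group on the set X, regarded as an X-generated group via the canonical inclusion. Then F(FG_X) is a free X-generated F-inverse monoid: for every F-inverse monoid T and every map f : X → T there is a unique morphism of F-inverse monoids (preserving ·, ⁻¹, m and 1) from F(FG_X) to T sending (Γ_x, x) to f(x) for every x ∈ X. -/

import Mathlib

/-!
For a group morphism `ψ : G → T/σ` write `M g` for the maximum of the σ-class `ψ g`. The
morphism `F(G) → T` sends `(Γ, g)` to the product of the idempotents `M v (M v)⁻¹` over the
vertices `v` of `Γ` and `M p (f x) (f x)⁻¹ (M p)⁻¹` over its edges `(p, x)`, followed by `M g`.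
Since `M g M h ≤ M (g h)` and `(M g)⁻¹ M (g h) ≤ M h`, one gets `M g M h = M g (M g)⁻¹ M (g h)`,
so that `M g` slides past the idempotent of a subgraph `Γ`, turning it into that of `g Γ`; this
gives multiplicativity. For `G = FG_X` the morphism `ψ` exists by freeness. Uniqueness: every
`(Γ, g)` is a product of `(Δ_g, g)` and the idempotents `c c⁻¹` of the elements `(Δ_v, v)` and
`(Δ_p, p) (Γ_x, x)`, and `(Δ_g, g)` lies in the F-inverse submonoid generated by the `(Γ_x, x)`
because `m(Γ_x, x) = (Δ_x, x)`, `m((Δ_g, g)(Δ_h, h)) = (Δ_{gh}, gh)` and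
`m((Δ_g, g)⁻¹) = (Δ_{g⁻¹}, g⁻¹)`.
-/

namespace FInvPaper

universe u v w

section Generic
variable {S : Type u}

/-- The natural partial order on an inverse monoid: `a ≤ b` iff `a = b·e` for some idempotent. -/
def nle [Mul S] (a b : S) : Prop := ∃ e : S, e * e = e ∧ a = b * e

/-- The minimum group congruence σ: `a σ b` iff `a·e = b·e` for some idempotent `e`. -/
def sigma [Mul S] (a b : S) : Prop := ∃ e : S, e * e = e ∧ a * e = b * e

/-- `m` assigns to every element the maximum element of its σ-class. -/
def IsMaxOp [Mul S] (m : S → S) : Prop :=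
  ∀ a : S, sigma (m a) a ∧ ∀ b : S, sigma b a → nle b (m a)

/-- A subset of `S` which is an entire σ-class. -/
def IsSigmaClass [Mul S] (A : Set S) : Prop := ∃ a : S, A = {b : S | sigma b a}

end Generic

/-- Inverse monoids: monoids with an involution satisfying `a·a⁻¹·a = a`, `(a·b)⁻¹ = b⁻¹·a⁻¹`,
in which all idempotents commute. -/
class InverseMonoid (S : Type u) extends Monoid S, Inv S where
  inv_inv : ∀ a : S, a⁻¹⁻¹ = a
  mul_inv_rev : ∀ a b : S, (a * b)⁻¹ = b⁻¹ * a⁻¹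
  mul_inv_self_mul : ∀ a : S, a * a⁻¹ * a = a
  idem_comm : ∀ e f : S, e * e = e → f * f = f → e * f = f * e

/-- F-inverse monoids in the enriched signature `(·, ⁻¹, ᵐ, 1)`. -/
class FInverseMonoid (S : Type u) extends InverseMonoid S where
  mx : S → S
  mx_isMaxOp : IsMaxOp mx

/-- The max-operation of an F-inverse monoid. -/
def mx {S : Type u} [FInverseMonoid S] : S → S := FInverseMonoid.mx

section InverseMonoidLemmas

variable {S : Type u} [InverseMonoid S]

lemma mul_inv_idem (a : S) : (a * a⁻¹) * (a * a⁻¹) = a * a⁻¹ := by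
  conv_lhs => rw [← mul_assoc, InverseMonoid.mul_inv_self_mul]

lemma inv_mul_self_mul (a : S) : a⁻¹ * a * a⁻¹ = a⁻¹ := by
  have h := InverseMonoid.mul_inv_self_mul (a := a⁻¹)
  rwa [InverseMonoid.inv_inv] at h

lemma inv_mul_idem (a : S) : (a⁻¹ * a) * (a⁻¹ * a) = a⁻¹ * a := by
  conv_lhs => rw [← mul_assoc, inv_mul_self_mul]

lemma idem_inv {e : S} (he : e * e = e) : e⁻¹ = e := by
  have h1 : e⁻¹ * e⁻¹ = e⁻¹ := by rw [← InverseMonoid.mul_inv_rev, he]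
  have hc : e * e⁻¹ = e⁻¹ * e := InverseMonoid.idem_comm e e⁻¹ he h1
  have h2 : e = e * e⁻¹ := by
    calc e = e * e⁻¹ * e := (InverseMonoid.mul_inv_self_mul e).symm
    _ = e * (e⁻¹ * e) := mul_assoc _ _ _
    _ = e * (e * e⁻¹) := by rw [hc]
    _ = e * e * e⁻¹ := (mul_assoc _ _ _).symm
    _ = e * e⁻¹ := by rw [he]
  have h3 : e⁻¹ = e⁻¹ * e := by
    calc e⁻¹ = e⁻¹ * e * e⁻¹ := (inv_mul_self_mul e).symm
    _ = e⁻¹ * (e * e⁻¹) := mul_assoc _ _ _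
    _ = e⁻¹ * (e⁻¹ * e) := by rw [hc]
    _ = e⁻¹ * e⁻¹ * e := (mul_assoc _ _ _).symm
    _ = e⁻¹ * e := by rw [h1]
  rw [h3, ← hc, ← h2]

lemma idem_mul_idem {e f : S} (he : e * e = e) (hf : f * f = f) :
    (e * f) * (e * f) = e * f := by
  calc (e * f) * (e * f) = e * (f * (e * f)) := mul_assoc _ _ _
  _ = e * (f * e * f) := by rw [← mul_assoc f e f]
  _ = e * (e * f * f) := by rw [← InverseMonoid.idem_comm e f he hf]
  _ = e * (e * (f * f)) := by rw [mul_assoc e f f]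
  _ = e * (e * f) := by rw [hf]
  _ = e * e * f := (mul_assoc _ _ _).symm
  _ = e * f := by rw [he]

lemma sigma_refl (a : S) : sigma a a := ⟨1, one_mul 1, rfl⟩

lemma sigma_symm {a b : S} (h : sigma a b) : sigma b a := by
  obtain ⟨e, he, hab⟩ := h
  exact ⟨e, he, hab.symm⟩

lemma sigma_trans {a b c : S} (h₁ : sigma a b) (h₂ : sigma b c) : sigma a c := by
  obtain ⟨e, he, h1⟩ := h₁
  obtain ⟨f, hf, h2⟩ := h₂
  refine ⟨e * f, idem_mul_idem he hf, ?_⟩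
  calc a * (e * f) = a * e * f := (mul_assoc _ _ _).symm
  _ = b * e * f := by rw [h1]
  _ = b * (e * f) := mul_assoc _ _ _
  _ = b * (f * e) := by rw [InverseMonoid.idem_comm e f he hf]
  _ = b * f * e := (mul_assoc _ _ _).symm
  _ = c * f * e := by rw [h2]
  _ = c * (f * e) := mul_assoc _ _ _
  _ = c * (e * f) := by rw [InverseMonoid.idem_comm e f he hf]

lemma sigma_mul_left {a b : S} (c : S) (h : sigma a b) : sigma (c * a) (c * b) := by
  obtain ⟨e, he, hab⟩ := h
  exact ⟨e, he, by rw [mul_assoc, hab, ← mul_assoc]⟩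

lemma inner_lemma {e : S} (he : e * e = e) (a : S) :
    a⁻¹ * (a * e * a⁻¹) = e * a⁻¹ := by
  calc a⁻¹ * (a * e * a⁻¹) = a⁻¹ * (a * e) * a⁻¹ := by rw [← mul_assoc a⁻¹ (a * e) a⁻¹]
  _ = a⁻¹ * a * e * a⁻¹ := by rw [← mul_assoc a⁻¹ a e]
  _ = e * (a⁻¹ * a) * a⁻¹ := by rw [InverseMonoid.idem_comm (a⁻¹ * a) e (inv_mul_idem a) he]
  _ = e * (a⁻¹ * a * a⁻¹) := by rw [mul_assoc e (a⁻¹ * a) a⁻¹]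
  _ = e * a⁻¹ := by rw [inv_mul_self_mul]

lemma sigma_inv {a b : S} (h : sigma a b) : sigma a⁻¹ b⁻¹ := by
  obtain ⟨e, he, hab⟩ := h
  have key5 : e * a⁻¹ = e * b⁻¹ := by
    have h' : (a * e)⁻¹ = (b * e)⁻¹ := by rw [hab]
    rwa [InverseMonoid.mul_inv_rev, InverseMonoid.mul_inv_rev, idem_inv he] at h'
  have key1 : (a * e * a⁻¹) * (a * e * a⁻¹) = a * e * a⁻¹ := by
    calc (a * e * a⁻¹) * (a * e * a⁻¹) = a * e * (a⁻¹ * (a * e * a⁻¹)) := mul_assoc _ _ _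
    _ = a * e * (e * a⁻¹) := by rw [inner_lemma he a]
    _ = a * e * e * a⁻¹ := (mul_assoc _ _ _).symm
    _ = a * (e * e) * a⁻¹ := by rw [mul_assoc a e e]
    _ = a * e * a⁻¹ := by rw [he]
  have key3 : a * e * a⁻¹ = b * e * b⁻¹ := by
    calc a * e * a⁻¹ = a * (e * e) * a⁻¹ := by rw [he]
    _ = a * e * e * a⁻¹ := by rw [← mul_assoc a e e]
    _ = a * e * (e * a⁻¹) := mul_assoc _ _ _
    _ = a * e * (e * b⁻¹) := by rw [key5]
    _ = b * e * (e * b⁻¹) := by rw [hab]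
    _ = b * e * e * b⁻¹ := (mul_assoc _ _ _).symm
    _ = b * (e * e) * b⁻¹ := by rw [mul_assoc b e e]
    _ = b * e * b⁻¹ := by rw [he]
  refine ⟨a * e * a⁻¹, key1, ?_⟩
  rw [inner_lemma he a, key5, key3, inner_lemma he b]

lemma sigma_mul_right {a b : S} (c : S) (h : sigma a b) : sigma (a * c) (b * c) := by
  have h1 := sigma_mul_left c⁻¹ (sigma_inv h)
  have h2 := sigma_inv h1
  rwa [InverseMonoid.mul_inv_rev c⁻¹ a⁻¹, InverseMonoid.mul_inv_rev c⁻¹ b⁻¹,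
    InverseMonoid.inv_inv, InverseMonoid.inv_inv, InverseMonoid.inv_inv] at h2

instance sigmaSetoid (S : Type u) [InverseMonoid S] : Setoid S where
  r := sigma
  iseqv := ⟨sigma_refl, sigma_symm, sigma_trans⟩

/-- The maximum group quotient `S/σ`. -/
def GQuot (S : Type u) [InverseMonoid S] : Type u := Quotient (sigmaSetoid S)

/-- The σ-class of an element, as an element of the maximum group quotient. -/
def σclass {S : Type u} [InverseMonoid S] (a : S) : GQuot S := Quotient.mk (sigmaSetoid S) a

instance (S : Type u) [InverseMonoid S] : Group (GQuot S) where
  mul := Quotient.map₂ (· * ·) (fun _ _ h₁ _ _ h₂ =>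
    sigma_trans (sigma_mul_right _ h₁) (sigma_mul_left _ h₂))
  one := σclass 1
  inv := Quotient.map (·⁻¹) (fun _ _ h => sigma_inv h)
  mul_assoc := by
    intro a b c
    induction a using Quotient.ind
    induction b using Quotient.ind
    induction c using Quotient.ind
    exact congrArg (Quotient.mk _) (mul_assoc _ _ _)
  one_mul := by
    intro a
    induction a using Quotient.ind
    exact congrArg (Quotient.mk _) (one_mul _)
  mul_one := by
    intro a
    induction a using Quotient.ind
    exact congrArg (Quotient.mk _) (mul_one _)
  inv_mul_cancel := by
    intro a
    induction a using Quotient.ind with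
    | _ a =>
      refine Quotient.sound ⟨a⁻¹ * a, inv_mul_idem a, ?_⟩
      rw [one_mul]
      exact inv_mul_idem a

end InverseMonoidLemmas


section Graphs

variable {G : Type u} [Group G] {X : Type v}

/-- A subgraph of the Cayley graph `Cay(G)` of the `X`-generated group `G` (with assignment
mapping `φ : X → G`), represented by its set of vertices and its set of positive edges:
the positive edge `(g, x)` goes from `g` to `g * φ x` and carries the label `x`; every
subgraph closed under edge inversion is uniquely determined by this data. -/
structure Subgraph (φ : X → G) : Type (max u v) where
  verts : Set G
  edges : Set (G × X)
  src_mem : ∀ e ∈ edges, Prod.fst e ∈ verts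
  tgt_mem : ∀ e ∈ edges, e.1 * φ e.2 ∈ verts

namespace Subgraph

variable {φ : X → G}

lemma ext' {Γ Δ : Subgraph φ} (hv : Γ.verts = Δ.verts) (he : Γ.edges = Δ.edges) : Γ = Δ := by
  cases Γ; cases Δ; cases hv; cases he; rfl

/-- Union of subgraphs. -/
def union (Γ Δ : Subgraph φ) : Subgraph φ where
  verts := Γ.verts ∪ Δ.verts
  edges := Γ.edges ∪ Δ.edges
  src_mem := by
    intro e he
    rcases he with h | h
    · exact Set.mem_union_left _ (Γ.src_mem e h)
    · exact Set.mem_union_right _ (Δ.src_mem e h)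
  tgt_mem := by
    intro e he
    rcases he with h | h
    · exact Set.mem_union_left _ (Γ.tgt_mem e h)
    · exact Set.mem_union_right _ (Δ.tgt_mem e h)

instance : Union (Subgraph φ) := ⟨union⟩

@[simp] lemma union_verts (Γ Δ : Subgraph φ) : (Γ ∪ Δ).verts = Γ.verts ∪ Δ.verts := rfl
@[simp] lemma union_edges (Γ Δ : Subgraph φ) : (Γ ∪ Δ).edges = Γ.edges ∪ Δ.edges := rfl

/-- Left translation of a subgraph by a group element. -/
def smul (g : G) (Γ : Subgraph φ) : Subgraph φ where
  verts := (g * ·) '' Γ.verts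
  edges := (fun e => (g * e.1, e.2)) '' Γ.edges
  src_mem := by
    rintro e ⟨e', he', rfl⟩
    exact ⟨e'.1, Γ.src_mem e' he', rfl⟩
  tgt_mem := by
    rintro e ⟨e', he', rfl⟩
    exact ⟨e'.1 * φ e'.2, Γ.tgt_mem e' he', (mul_assoc g e'.1 (φ e'.2)).symm⟩

instance : SMul G (Subgraph φ) := ⟨smul⟩

@[simp] lemma smul_verts (g : G) (Γ : Subgraph φ) : (g • Γ).verts = (g * ·) '' Γ.verts := rfl
@[simp] lemma smul_edges (g : G) (Γ : Subgraph φ) :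
    (g • Γ).edges = (fun e : G × X => (g * e.1, e.2)) '' Γ.edges := rfl

/-- The subgraph relation. -/
instance : HasSubset (Subgraph φ) := ⟨fun Γ Δ => Γ.verts ⊆ Δ.verts ∧ Γ.edges ⊆ Δ.edges⟩

lemma subset_iff (Γ Δ : Subgraph φ) : Γ ⊆ Δ ↔ Γ.verts ⊆ Δ.verts ∧ Γ.edges ⊆ Δ.edges := Iff.rfl

/-- Finiteness of a subgraph. -/
def IsFinite (Γ : Subgraph φ) : Prop := Γ.verts.Finite ∧ Γ.edges.Finite

/-- A subgraph has no isolated vertices if each of its vertices is an endpoint of one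
of its edges. -/
def NoIsolated (Γ : Subgraph φ) : Prop :=
  ∀ v ∈ Γ.verts, ∃ e ∈ Γ.edges, v = e.1 ∨ v = e.1 * φ e.2

/-- `Ed(Γ)`: the subgraph spanned by the edges of `Γ`, i.e. `Γ` with all isolated vertices
removed. -/
def ed (Γ : Subgraph φ) : Subgraph φ where
  verts := {v | ∃ e ∈ Γ.edges, v = e.1 ∨ v = e.1 * φ e.2}
  edges := Γ.edges
  src_mem := fun e he => ⟨e, he, Or.inl rfl⟩
  tgt_mem := fun e he => ⟨e, he, Or.inr rfl⟩

lemma ed_finite {Γ : Subgraph φ} (h : Γ.IsFinite) : Γ.ed.IsFinite := by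
  constructor
  · have hsub : Γ.ed.verts ⊆
        (fun e : G × X => e.1) '' Γ.edges ∪ (fun e : G × X => e.1 * φ e.2) '' Γ.edges := by
      rintro v ⟨e, he, rfl | rfl⟩
      · exact Set.mem_union_left _ ⟨e, he, rfl⟩
      · exact Set.mem_union_right _ ⟨e, he, rfl⟩
    exact ((h.2.image _).union (h.2.image _)).subset hsub
  · exact h.2

lemma ed_noIsolated (Γ : Subgraph φ) : Γ.ed.NoIsolated := fun _ hv => hv

end Subgraph

open Subgraph

variable {φ : X → G}

/-- The subgraph with the single vertex `g` and no edges. -/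
def vertexG (φ : X → G) (g : G) : Subgraph φ :=
  ⟨{g}, ∅, by simp, by simp⟩

/-- `Δ_g`: the edgeless subgraph with vertices `1` and `g`. -/
def deltaG (φ : X → G) (g : G) : Subgraph φ :=
  ⟨{1, g}, ∅, by simp, by simp⟩

/-- The subgraph spanned by a single (positive) edge. -/
def edgeG (φ : X → G) (e : G × X) : Subgraph φ where
  verts := {e.1, e.1 * φ e.2}
  edges := {e}
  src_mem := by
    intro e' he'
    rw [Set.mem_singleton_iff] at he'
    subst he'
    exact Set.mem_insert _ _
  tgt_mem := by
    intro e' he'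
    rw [Set.mem_singleton_iff] at he'
    subst he'
    exact Set.mem_insert_of_mem _ rfl

/-- The empty subgraph. -/
def emptyG (φ : X → G) : Subgraph φ := ⟨∅, ∅, by simp, by simp⟩

lemma edgeG_noIsolated (φ : X → G) (e : G × X) : (edgeG φ e).NoIsolated := by
  intro v hv
  refine ⟨e, Set.mem_singleton e, ?_⟩
  simpa [edgeG] using hv

/-- Two vertices are adjacent in `Γ` if they are connected by an edge of `Γ`. -/
def adj (Γ : Subgraph φ) (u v : G) : Prop :=
  ∃ e ∈ Γ.edges, (u = e.1 ∧ v = e.1 * φ e.2) ∨ (v = e.1 ∧ u = e.1 * φ e.2)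

/-- A subgraph is connected if any two of its vertices are joined by a path running in it. -/
def Connected (Γ : Subgraph φ) : Prop :=
  ∀ u ∈ Γ.verts, ∀ v ∈ Γ.verts, Relation.ReflTransGen (adj Γ) u v

lemma adj_mono {Γ Δ : Subgraph φ} (h : Γ.edges ⊆ Δ.edges) {u v : G} (ha : adj Γ u v) :
    adj Δ u v := by
  obtain ⟨e, he, hc⟩ := ha
  exact ⟨e, h he, hc⟩

lemma Connected.union {Γ Δ : Subgraph φ} (hΓ : Connected Γ) (hΔ : Connected Δ) (w : G)
    (hw₁ : w ∈ Γ.verts) (hw₂ : w ∈ Δ.verts) : Connected (Γ ∪ Δ) := by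
  have hsΓ : Γ.edges ⊆ (Γ ∪ Δ).edges := by
    rw [union_edges]; exact Set.subset_union_left
  have hsΔ : Δ.edges ⊆ (Γ ∪ Δ).edges := by
    rw [union_edges]; exact Set.subset_union_right
  have mΓ : ∀ {p q : G}, Relation.ReflTransGen (adj Γ) p q →
      Relation.ReflTransGen (adj (Γ ∪ Δ)) p q :=
    fun h => Relation.ReflTransGen.mono (fun _ _ h' => adj_mono hsΓ h') _ _ h
  have mΔ : ∀ {p q : G}, Relation.ReflTransGen (adj Δ) p q →
      Relation.ReflTransGen (adj (Γ ∪ Δ)) p q :=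
    fun h => Relation.ReflTransGen.mono (fun _ _ h' => adj_mono hsΔ h') _ _ h
  intro u hu v hv
  rw [union_verts] at hu hv
  rcases hu with hu | hu <;> rcases hv with hv | hv
  · exact mΓ (hΓ u hu v hv)
  · exact (mΓ (hΓ u hu w hw₁)).trans (mΔ (hΔ w hw₂ v hv))
  · exact (mΔ (hΔ u hu w hw₂)).trans (mΓ (hΓ w hw₁ v hv))
  · exact mΔ (hΔ u hu v hv)

lemma Connected.smul {Γ : Subgraph φ} (g : G) (h : Connected Γ) : Connected (g • Γ) := by
  intro u hu v hv
  rw [smul_verts] at hu hv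
  obtain ⟨u', hu', rfl⟩ := hu
  obtain ⟨v', hv', rfl⟩ := hv
  refine Relation.ReflTransGen.lift (fun z => g * z) ?_ _ _ (h u' hu' v' hv')
  rintro p q ⟨e, he, hc⟩
  show adj (g • Γ) (g * p) (g * q)
  refine ⟨(g * e.1, e.2), ?_, ?_⟩
  · rw [smul_edges]; exact ⟨e, he, rfl⟩
  · rcases hc with ⟨rfl, rfl⟩ | ⟨rfl, rfl⟩
    · exact Or.inl ⟨rfl, (mul_assoc _ _ _).symm⟩
    · exact Or.inr ⟨rfl, (mul_assoc _ _ _).symm⟩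

lemma Subgraph.NoIsolated.union {Γ Δ : Subgraph φ} (hΓ : Γ.NoIsolated) (hΔ : Δ.NoIsolated) :
    (Γ ∪ Δ).NoIsolated := by
  intro v hv
  rw [union_verts] at hv
  rcases hv with hv | hv
  · obtain ⟨e, he, hor⟩ := hΓ v hv
    exact ⟨e, by rw [union_edges]; exact Set.mem_union_left _ he, hor⟩
  · obtain ⟨e, he, hor⟩ := hΔ v hv
    exact ⟨e, by rw [union_edges]; exact Set.mem_union_right _ he, hor⟩

lemma Subgraph.NoIsolated.smul {Γ : Subgraph φ} (g : G) (h : Γ.NoIsolated) :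
    (g • Γ).NoIsolated := by
  intro v hv
  rw [smul_verts] at hv
  obtain ⟨u, hu, rfl⟩ := hv
  obtain ⟨e, he, hor⟩ := h u hu
  refine ⟨(g * e.1, e.2), by rw [smul_edges]; exact ⟨e, he, rfl⟩, ?_⟩
  rcases hor with rfl | rfl
  · exact Or.inl rfl
  · exact Or.inr (mul_assoc _ _ _).symm

end Graphs


section Expansions

variable {G : Type u} [Group G] {X : Type v} {φ : X → G}

open Subgraph

/-- `F(G)`: pairs `(Γ, g)` where `Γ` is a finite subgraph of `Cay(G)` having `1` and `g`
among its vertices. -/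
structure FExp (φ : X → G) : Type (max u v) where
  graph : Subgraph φ
  elt : G
  finite : graph.IsFinite
  one_mem : (1 : G) ∈ graph.verts
  elt_mem : elt ∈ graph.verts

namespace FExp

lemma ext' {a b : FExp φ} (hg : a.graph = b.graph) (he : a.elt = b.elt) : a = b := by
  cases a; cases b; cases hg; cases he; rfl

instance : Mul (FExp φ) :=
  ⟨fun a b =>
    { graph := a.graph ∪ a.elt • b.graph
      elt := a.elt * b.elt
      finite := ⟨by
          rw [union_verts, smul_verts]
          exact a.finite.1.union (b.finite.1.image _),
        by
          rw [union_edges, smul_edges]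
          exact a.finite.2.union (b.finite.2.image _)⟩
      one_mem := by
        rw [union_verts]
        exact Set.mem_union_left _ a.one_mem
      elt_mem := by
        rw [union_verts]
        refine Set.mem_union_right _ ?_
        rw [smul_verts]
        exact ⟨b.elt, b.elt_mem, rfl⟩ }⟩

@[simp] lemma mul_graph (a b : FExp φ) : (a * b).graph = a.graph ∪ a.elt • b.graph := rfl
@[simp] lemma mul_elt (a b : FExp φ) : (a * b).elt = a.elt * b.elt := rfl

instance : One (FExp φ) :=
  ⟨{ graph := deltaG φ 1
     elt := 1
     finite := ⟨(Set.finite_singleton (1 : G)).insert 1, Set.finite_empty⟩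
     one_mem := Set.mem_insert 1 _
     elt_mem := Set.mem_insert 1 _ }⟩

@[simp] lemma one_graph : (1 : FExp φ).graph = deltaG φ 1 := rfl
@[simp] lemma one_elt : (1 : FExp φ).elt = 1 := rfl

instance : Inv (FExp φ) :=
  ⟨fun a =>
    { graph := a.elt⁻¹ • a.graph
      elt := a.elt⁻¹
      finite := ⟨by rw [smul_verts]; exact a.finite.1.image _,
        by rw [smul_edges]; exact a.finite.2.image _⟩
      one_mem := by
        rw [smul_verts]
        exact ⟨a.elt, a.elt_mem, inv_mul_cancel a.elt⟩
      elt_mem := by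
        rw [smul_verts]
        exact ⟨1, a.one_mem, mul_one _⟩ }⟩

@[simp] lemma inv_graph (a : FExp φ) : (a⁻¹).graph = a.elt⁻¹ • a.graph := rfl
@[simp] lemma inv_elt (a : FExp φ) : (a⁻¹).elt = a.elt⁻¹ := rfl

end FExp

/-- The element `(Δ_g, g)` of `F(G)`. -/
def maxElt (φ : X → G) (g : G) : FExp φ where
  graph := deltaG φ g
  elt := g
  finite := ⟨(Set.finite_singleton g).insert 1, Set.finite_empty⟩
  one_mem := Set.mem_insert 1 _
  elt_mem := Set.mem_insert_of_mem _ rfl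

/-- The max-operation `(Γ, g) ↦ (Δ_g, g)` on `F(G)`. -/
def mxOp (a : FExp φ) : FExp φ := maxElt φ a.elt

/-- The generator `(Γ_x, x_G)` of `F(G)`. -/
def genElt (φ : X → G) (x : X) : FExp φ where
  graph := edgeG φ (1, x)
  elt := φ x
  finite := ⟨(Set.finite_singleton _).insert _, Set.finite_singleton _⟩
  one_mem := Set.mem_insert 1 _
  elt_mem := by simp [edgeG]

/-- `M(G)`: the Margolis–Meakin expansion; pairs `(Γ, g)` where `Γ` is a finite *connected*
subgraph of `Cay(G)` having `1` and `g` among its vertices. -/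
structure MExp (φ : X → G) : Type (max u v) where
  graph : Subgraph φ
  elt : G
  finite : graph.IsFinite
  connected : Connected graph
  one_mem : (1 : G) ∈ graph.verts
  elt_mem : elt ∈ graph.verts

namespace MExp

instance : Mul (MExp φ) :=
  ⟨fun a b =>
    { graph := a.graph ∪ a.elt • b.graph
      elt := a.elt * b.elt
      finite := ⟨by
          rw [union_verts, smul_verts]
          exact a.finite.1.union (b.finite.1.image _),
        by
          rw [union_edges, smul_edges]
          exact a.finite.2.union (b.finite.2.image _)⟩
      connected := by
        refine Connected.union a.connected (Connected.smul a.elt b.connected) a.elt a.elt_mem ?_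
        rw [smul_verts]
        exact ⟨1, b.one_mem, mul_one _⟩
      one_mem := by
        rw [union_verts]
        exact Set.mem_union_left _ a.one_mem
      elt_mem := by
        rw [union_verts]
        refine Set.mem_union_right _ ?_
        rw [smul_verts]
        exact ⟨b.elt, b.elt_mem, rfl⟩ }⟩

end MExp

/-- `P(G)`: pairs `(Γ, g)` where `Γ` is a finite subgraph of `Cay(G)` without isolated
vertices and `g ∈ G` (a model of the semidirect product of the semilattice of such
subgraphs by `G`). -/
structure PExp (φ : X → G) : Type (max u v) where
  graph : Subgraph φ
  elt : G
  finite : graph.IsFinite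
  noIsolated : graph.NoIsolated

namespace PExp

lemma ext' {a b : PExp φ} (hg : a.graph = b.graph) (he : a.elt = b.elt) : a = b := by
  cases a; cases b; cases hg; cases he; rfl

instance : Mul (PExp φ) :=
  ⟨fun a b =>
    { graph := a.graph ∪ a.elt • b.graph
      elt := a.elt * b.elt
      finite := ⟨by
          rw [union_verts, smul_verts]
          exact a.finite.1.union (b.finite.1.image _),
        by
          rw [union_edges, smul_edges]
          exact a.finite.2.union (b.finite.2.image _)⟩
      noIsolated := a.noIsolated.union (b.noIsolated.smul a.elt) }⟩

@[simp] lemma mul_graph (a b : PExp φ) : (a * b).graph = a.graph ∪ a.elt • b.graph := rfl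
@[simp] lemma mul_elt (a b : PExp φ) : (a * b).elt = a.elt * b.elt := rfl

instance : One (PExp φ) :=
  ⟨{ graph := emptyG φ
     elt := 1
     finite := ⟨Set.finite_empty, Set.finite_empty⟩
     noIsolated := by intro v hv; simp [emptyG] at hv }⟩

@[simp] lemma one_graph : (1 : PExp φ).graph = emptyG φ := rfl
@[simp] lemma one_elt : (1 : PExp φ).elt = 1 := rfl

instance : Inv (PExp φ) :=
  ⟨fun a =>
    { graph := a.elt⁻¹ • a.graph
      elt := a.elt⁻¹
      finite := ⟨by rw [smul_verts]; exact a.finite.1.image _,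
        by rw [smul_edges]; exact a.finite.2.image _⟩
      noIsolated := a.noIsolated.smul _ }⟩

@[simp] lemma inv_graph (a : PExp φ) : (a⁻¹).graph = a.elt⁻¹ • a.graph := rfl
@[simp] lemma inv_elt (a : PExp φ) : (a⁻¹).elt = a.elt⁻¹ := rfl

end PExp

/-- The max-operation `(Γ, g) ↦ (∅, g)` on `P(G)`. -/
def pMax (a : PExp φ) : PExp φ where
  graph := emptyG φ
  elt := a.elt
  finite := ⟨Set.finite_empty, Set.finite_empty⟩
  noIsolated := by intro v hv; simp [emptyG] at hv

/-- The generator `(Γ_x, x_G)` of `P(G)`. -/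
def genEltP (φ : X → G) (x : X) : PExp φ where
  graph := edgeG φ (1, x)
  elt := φ x
  finite := ⟨(Set.finite_singleton _).insert _, Set.finite_singleton _⟩
  noIsolated := edgeG_noIsolated φ (1, x)

/-- The canonical map `F(G) → P(G)`, `(Γ, g) ↦ (Ed(Γ), g)`. -/
def edMap (a : FExp φ) : PExp φ where
  graph := a.graph.ed
  elt := a.elt
  finite := ed_finite a.finite
  noIsolated := a.graph.ed_noIsolated

/-- The relation `θ` on `F(G)`: `(Γ,g) θ (Ξ,h)` iff `g = h` and `Ed(Γ) = Ed(Ξ)`. -/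
def thetaRel (φ : X → G) (a b : FExp φ) : Prop := a.elt = b.elt ∧ a.graph.ed = b.graph.ed

end Expansions

section Terms

variable {X : Type v}

/-- Terms of the term algebra `I^m_X` in their (unique) normal form
`u₀ · m(v₁) · u₁ ⋯ u_{n-1} · m(vₙ) · uₙ` with `uᵢ, vⱼ` words in the free monoid with
involution `I_X` on `X` (represented as lists over `X ⊕ X`, where `inl x` stands for `x`
and `inr x` for `x⁻¹`): the first component is `u₀`, and the second lists the pairs
`(vᵢ, uᵢ)`. -/
abbrev MTerm (X : Type v) := List (X ⊕ X) × List (List (X ⊕ X) × List (X ⊕ X))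

/-- Value of a letter of `X ⊔ X⁻¹`. -/
def letterVal {M : Type w} [Monoid M] [Inv M] (f : X → M) : X ⊕ X → M
  | Sum.inl x => f x
  | Sum.inr x => (f x)⁻¹

/-- Value of a word of `I_X`. -/
def wordVal {M : Type w} [Monoid M] [Inv M] (f : X → M) (u : List (X ⊕ X)) : M :=
  (u.map (letterVal f)).prod

/-- Value `[t]` of a term `t ∈ I^m_X` under the assignment `f` of the generators,
where `mop` is interpreted as the operation `m`. -/
def termVal {M : Type w} [Monoid M] [Inv M] (f : X → M) (mop : M → M) (t : MTerm X) : M :=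
  wordVal f t.1 * (t.2.map (fun p => mop (wordVal f p.1) * wordVal f p.2)).prod

end Terms

section Journeys

variable {G : Type u} [Group G] {X : Type v}

/-- The subgraph of `Cay(G)` spanned by the path starting at `g` with label the given word;
for the empty word it is the single vertex `g`. -/
def pathGraph (φ : X → G) : G → List (X ⊕ X) → Subgraph φ
  | g, [] => vertexG φ g
  | g, Sum.inl x :: u => edgeG φ (g, x) ∪ pathGraph φ (g * φ x) u
  | g, Sum.inr x :: u => edgeG φ (g * (φ x)⁻¹, x) ∪ pathGraph φ (g * (φ x)⁻¹) u

/-- The subgraph of `Cay(G)` spanned by the journey `j_g(w)` induced by the term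
`w = u₀ · m(v₁) · u₁ ⋯ · m(vₙ) · uₙ` starting at `g`: traverse the path labelled `u₀`
from `g`, jump to `g·[u₀v₁]`, traverse the path labelled `u₁`, and so on. -/
def journeyGraph (φ : X → G) : G → List (X ⊕ X) → List (List (X ⊕ X) × List (X ⊕ X)) →
    Subgraph φ
  | g, u, [] => pathGraph φ g u
  | g, u, (v, u') :: rest =>
      pathGraph φ g u ∪ journeyGraph φ (g * wordVal φ u * wordVal φ v) u' rest

end Journeys

namespace InverseMonoid

variable {S : Type u} [InverseMonoid S] {a b c e : S}

lemma inv_one : (1 : S)⁻¹ = 1 := idem_inv (one_mul 1)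

lemma conj_idem (a : S) (he : e * e = e) : (a * e * a⁻¹) * (a * e * a⁻¹) = a * e * a⁻¹ := by
  calc (a * e * a⁻¹) * (a * e * a⁻¹) = a * e * (a⁻¹ * (a * e * a⁻¹)) := by rw [mul_assoc]
  _ = a * e * (e * a⁻¹) := by rw [inner_lemma he]
  _ = a * e * a⁻¹ := by rw [← mul_assoc, mul_assoc a e e, he]

lemma mul_idem_eq_conj_mul (a : S) (he : e * e = e) : a * e = a * e * a⁻¹ * a := by
  calc a * e = a * a⁻¹ * a * e := by rw [mul_inv_self_mul]
  _ = a * ((a⁻¹ * a) * e) := by simp only [mul_assoc]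
  _ = a * (e * (a⁻¹ * a)) := by rw [idem_comm _ _ (inv_mul_idem a) he]
  _ = a * e * a⁻¹ * a := by simp only [mul_assoc]

lemma nle_antisymm (hab : nle a b) (hba : nle b a) : a = b := by
  obtain ⟨e, he, rfl⟩ := hab
  obtain ⟨f, hf, hb⟩ := hba
  calc b * e = b * e * f * e := by rw [← hb]
  _ = b * e * f := by simp only [mul_assoc]; rw [idem_comm f e hf he, ← mul_assoc e e f, he]
  _ = b := hb.symm

lemma eq_mul_inv_mul_of_nle (h : nle a b) : a = a * a⁻¹ * b := by
  obtain ⟨e, he, rfl⟩ := h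
  calc b * e = b * (b⁻¹ * b) * e := by rw [← mul_assoc, mul_inv_self_mul]
  _ = b * e * (b⁻¹ * b) := by rw [mul_assoc b, idem_comm _ _ (inv_mul_idem b) he, mul_assoc]
  _ = b * e * (e * b⁻¹) * b := by simp only [mul_assoc, ← mul_assoc e e, he]
  _ = b * e * (b * e)⁻¹ * b := by rw [mul_inv_rev, idem_inv he]

lemma nle_inv (h : nle a b) : nle a⁻¹ b⁻¹ := by
  obtain ⟨e, he, rfl⟩ := h
  exact ⟨b * e * b⁻¹, conj_idem b he, by rw [mul_inv_rev, idem_inv he, inner_lemma he]⟩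

lemma mul_inv_mul_mul_inv_mul_of_nle (h : nle a b) : b * b⁻¹ * (a * a⁻¹) * b = a := by
  rw [idem_comm _ _ (mul_inv_idem b) (mul_inv_idem a), mul_assoc, mul_inv_self_mul,
    ← eq_mul_inv_mul_of_nle h]

lemma mul_eq_mul_inv_mul_of_nle (h₁ : nle (a * b) c) (h₂ : nle (a⁻¹ * c) b) :
    a * b = a * a⁻¹ * c := by
  obtain ⟨e, he, hab⟩ := h₁
  obtain ⟨f, hf, hac⟩ := h₂
  refine nle_antisymm ⟨e, he, ?_⟩ ⟨f, hf, ?_⟩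
  · conv_lhs => rw [← mul_inv_self_mul a, mul_assoc (a * a⁻¹), hab, ← mul_assoc]
  · rw [mul_assoc, hac, mul_assoc]

lemma mul_conj_eq_conj_mul (habc : a * b = a * a⁻¹ * c) (he : e * e = e) :
    a * (b * e * b⁻¹) = c * e * c⁻¹ * a := by
  have hce := conj_idem c he
  calc a * (b * e * b⁻¹)
      = a * b * e * (a * b)⁻¹ * a := by
        rw [mul_idem_eq_conj_mul a (conj_idem b he), mul_inv_rev]; simp only [mul_assoc]
    _ = a * a⁻¹ * (c * e * c⁻¹) * (a * a⁻¹ * a) := by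
        rw [habc, mul_inv_rev, mul_inv_rev, inv_inv]; simp only [mul_assoc]
    _ = c * e * c⁻¹ * a := by
        rw [mul_inv_self_mul, idem_comm _ _ (mul_inv_idem a) hce, mul_assoc, mul_inv_self_mul]

end InverseMonoid

open InverseMonoid

section MaxOfClass

variable {T : Type w} [FInverseMonoid T]

lemma sigma_mx (a : T) : sigma (mx a) a := (FInverseMonoid.mx_isMaxOp a).1

lemma nle_mx {a b : T} (h : sigma b a) : nle b (mx a) := (FInverseMonoid.mx_isMaxOp a).2 b h

lemma mx_congr {a b : T} (h : sigma a b) : mx a = mx b :=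
  nle_antisymm (nle_mx (sigma_trans (sigma_mx a) h))
    (nle_mx (sigma_trans (sigma_mx b) (sigma_symm h)))

def classMax : GQuot T → T := Quotient.lift mx fun _ _ => mx_congr

lemma classMax_σclass (a : T) : classMax (σclass a) = mx a := rfl

lemma σclass_mul (a b : T) : σclass (a * b) = σclass a * σclass b := rfl

lemma σclass_inv (a : T) : σclass a⁻¹ = (σclass a)⁻¹ := rfl

lemma σclass_of_idem {e : T} (he : e * e = e) : σclass e = 1 :=
  Quotient.sound ⟨e, he, by rw [he, one_mul]⟩

lemma σclass_classMax (c : GQuot T) : σclass (classMax c) = c := by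
  induction c using Quotient.ind with
  | _ a => exact Quotient.sound (sigma_mx a)

lemma nle_classMax {a : T} {c : GQuot T} (h : σclass a = c) : nle a (classMax c) := by
  subst h
  exact nle_mx (sigma_refl a)

lemma classMax_inv (c : GQuot T) : (classMax c)⁻¹ = classMax c⁻¹ := by
  refine nle_antisymm (nle_classMax (by rw [σclass_inv, σclass_classMax])) ?_
  have h := nle_inv (nle_classMax (c := c) (a := (classMax c⁻¹)⁻¹)
    (by rw [σclass_inv, σclass_classMax, _root_.inv_inv]))
  rwa [InverseMonoid.inv_inv] at h

lemma classMax_one : classMax (1 : GQuot T) = 1 := by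
  have h := eq_mul_inv_mul_of_nle (nle_classMax (a := (1 : T)) rfl)
  rwa [InverseMonoid.inv_one, one_mul, one_mul, eq_comm] at h

lemma mx_idem_mul_classMax {e : T} (he : e * e = e) (c : GQuot T) :
    mx (e * classMax c) = classMax c := by
  rw [← classMax_σclass, σclass_mul, σclass_of_idem he, σclass_classMax, one_mul]

end MaxOfClass

section Idempotents

lemma finprod_mem_union_of_idem {α M : Type*} [CommMonoid M] (hM : ∀ x : M, x * x = x)
    {f : α → M} {s t : Set α} (hs : s.Finite) (ht : t.Finite) :
    ∏ᶠ i ∈ s ∪ t, f i = (∏ᶠ i ∈ s, f i) * ∏ᶠ i ∈ t, f i := by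
  rw [← finprod_mem_union_inter hs ht,
    ← finprod_mem_mul_sdiff (Set.inter_subset_left.trans Set.subset_union_left) (hs.union ht),
    mul_right_comm, hM]

lemma finprod_mem_insert_of_idem {α M : Type*} [CommMonoid M] (hM : ∀ x : M, x * x = x)
    {f : α → M} {a : α} {s : Set α} (hs : s.Finite) :
    ∏ᶠ i ∈ insert a s, f i = f a * ∏ᶠ i ∈ s, f i := by
  rw [Set.insert_eq, finprod_mem_union_of_idem hM (Set.finite_singleton a) hs,
    finprod_mem_singleton]

variable {S : Type u} [InverseMonoid S]

def Idem (S : Type u) [InverseMonoid S] : Type u := {e : S // e * e = e}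

instance : CommMonoid (Idem S) where
  mul e f := ⟨e.1 * f.1, idem_mul_idem e.2 f.2⟩
  one := ⟨1, one_mul 1⟩
  mul_assoc e f g := Subtype.ext (mul_assoc e.1 f.1 g.1)
  one_mul e := Subtype.ext (one_mul e.1)
  mul_one e := Subtype.ext (mul_one e.1)
  mul_comm e f := Subtype.ext (InverseMonoid.idem_comm e.1 f.1 e.2 f.2)

namespace Idem

@[simp] lemma val_mul (e f : Idem S) : (e * f).1 = e.1 * f.1 := rfl

@[simp] lemma val_one : (1 : Idem S).1 = 1 := rfl

lemma mul_self (e : Idem S) : e * e = e := Subtype.ext e.2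

lemma mul_finprod_mem_eq {ι : Type*} {s : Set ι} (hs : s.Finite) (a : S) {e e' : ι → Idem S}
    (h : ∀ i ∈ s, a * (e i).1 = (e' i).1 * a) :
    a * (∏ᶠ i ∈ s, e i).1 = (∏ᶠ i ∈ s, e' i).1 * a := by
  induction s, hs using Set.Finite.induction_on with
  | empty => simp only [finprod_mem_empty, val_one, mul_one, one_mul]
  | @insert i s hi hs ih =>
    rw [finprod_mem_insert _ hi hs, finprod_mem_insert _ hi hs, val_mul, val_mul, ← mul_assoc,
      h i (Set.mem_insert i s), mul_assoc, ih fun j hj => h j (Set.mem_insert_of_mem i hj),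
      mul_assoc]

end Idem

end Idempotents

def IsFMorphismExtending {G : Type u} [Group G] {X : Type v} {T : Type w} [FInverseMonoid T]
    {φ : X → G} (f : X → T) (h : FExp φ → T) : Prop :=
  h 1 = 1 ∧ (∀ a b, h (a * b) = h a * h b) ∧ (∀ a, h a⁻¹ = (h a)⁻¹) ∧
    (∀ a, h (mxOp a) = mx (h a)) ∧ ∀ x : X, h (genElt φ x) = f x

lemma Subgraph.IsFinite.smul {G : Type u} [Group G] {X : Type v} {φ : X → G}
    {Γ : Subgraph φ} (hΓ : Γ.IsFinite) (g : G) : (g • Γ).IsFinite :=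
  ⟨hΓ.1.image _, hΓ.2.image _⟩

section Lift

open Subgraph

variable {G : Type u} [Group G] {X : Type v} {T : Type w} [FInverseMonoid T]
  (ψ : G →* GQuot T) (f : X → T) {φ : X → G}

def maxAt (g : G) : T := classMax (ψ g)

def vertexIdem (v : G) : Idem T := ⟨maxAt ψ v * (maxAt ψ v)⁻¹, mul_inv_idem _⟩

def edgeIdem (e : G × X) : Idem T :=
  ⟨maxAt ψ e.1 * (f e.2 * (f e.2)⁻¹) * (maxAt ψ e.1)⁻¹, conj_idem _ (mul_inv_idem _)⟩

noncomputable def graphIdem (Γ : Subgraph φ) : Idem T :=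
  (∏ᶠ v ∈ Γ.verts, vertexIdem ψ v) * ∏ᶠ e ∈ Γ.edges, edgeIdem ψ f e

noncomputable def expLift (a : FExp φ) : T := (graphIdem ψ f a.graph).1 * maxAt ψ a.elt

lemma val_vertexIdem (v : G) : (vertexIdem ψ v).1 = maxAt ψ v * (maxAt ψ v)⁻¹ := rfl

lemma val_edgeIdem (e : G × X) :
    (edgeIdem ψ f e).1 = maxAt ψ e.1 * (f e.2 * (f e.2)⁻¹) * (maxAt ψ e.1)⁻¹ := rfl

variable {ψ}

lemma maxAt_one : maxAt ψ 1 = 1 := by rw [maxAt, map_one, classMax_one]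

lemma maxAt_inv (g : G) : (maxAt ψ g)⁻¹ = maxAt ψ g⁻¹ := by
  rw [maxAt, maxAt, map_inv, classMax_inv]

lemma maxAt_mul (g h : G) :
    maxAt ψ g * maxAt ψ h = maxAt ψ g * (maxAt ψ g)⁻¹ * maxAt ψ (g * h) :=
  mul_eq_mul_inv_mul_of_nle
    (nle_classMax (by rw [σclass_mul, maxAt, maxAt, σclass_classMax, σclass_classMax, map_mul]))
    (nle_classMax (by
      rw [σclass_mul, σclass_inv, maxAt, maxAt, σclass_classMax, σclass_classMax, ← map_inv,
        ← map_mul, inv_mul_cancel_left]))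

lemma vertexIdem_one : vertexIdem ψ 1 = 1 :=
  Subtype.ext (by rw [val_vertexIdem, maxAt_one, InverseMonoid.inv_one, one_mul]; rfl)

lemma maxAt_mul_vertexIdem (g v : G) :
    maxAt ψ g * (vertexIdem ψ v).1 = (vertexIdem ψ (g * v)).1 * maxAt ψ g := by
  simpa only [val_vertexIdem, mul_one] using
    mul_conj_eq_conj_mul (maxAt_mul g v) (one_mul (1 : T))

lemma maxAt_mul_edgeIdem (g : G) (e : G × X) :
    maxAt ψ g * (edgeIdem ψ f e).1 = (edgeIdem ψ f (g * e.1, e.2)).1 * maxAt ψ g :=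
  mul_conj_eq_conj_mul (maxAt_mul g e.1) (mul_inv_idem _)

variable (ψ)

lemma graphIdem_union {Γ Δ : Subgraph φ} (hΓ : Γ.IsFinite) (hΔ : Δ.IsFinite) :
    graphIdem ψ f (Γ ∪ Δ) = graphIdem ψ f Γ * graphIdem ψ f Δ := by
  rw [graphIdem, union_verts, union_edges, finprod_mem_union_of_idem Idem.mul_self hΓ.1 hΔ.1,
    finprod_mem_union_of_idem Idem.mul_self hΓ.2 hΔ.2, mul_mul_mul_comm]
  rfl

lemma graphIdem_mul_vertexIdem {Γ : Subgraph φ} (hΓ : Γ.IsFinite) {v : G} (hv : v ∈ Γ.verts) :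
    graphIdem ψ f Γ * vertexIdem ψ v = graphIdem ψ f Γ := by
  conv_rhs =>
    rw [graphIdem, ← Set.insert_eq_of_mem hv, finprod_mem_insert_of_idem Idem.mul_self hΓ.1]
  rw [graphIdem, mul_right_comm, mul_comm (∏ᶠ v ∈ Γ.verts, _)]

lemma maxAt_mul_graphIdem {Γ : Subgraph φ} (hΓ : Γ.IsFinite) (g : G) :
    maxAt ψ g * (graphIdem ψ f Γ).1 = (graphIdem ψ f (g • Γ)).1 * maxAt ψ g := by
  have hv : ∏ᶠ v ∈ (g • Γ).verts, vertexIdem ψ v = ∏ᶠ v ∈ Γ.verts, vertexIdem ψ (g * v) :=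
    finprod_mem_image fun _ _ _ _ => mul_left_cancel
  have he :
      ∏ᶠ e ∈ (g • Γ).edges, edgeIdem ψ f e = ∏ᶠ e ∈ Γ.edges, edgeIdem ψ f (g * e.1, e.2) :=
    finprod_mem_image fun _ _ _ _ h => Prod.ext (mul_left_cancel (Prod.ext_iff.1 h).1)
      (Prod.ext_iff.1 h).2
  rw [graphIdem, graphIdem, hv, he, Idem.val_mul, Idem.val_mul, ← mul_assoc,
    Idem.mul_finprod_mem_eq hΓ.1 _ fun v _ => maxAt_mul_vertexIdem g v, mul_assoc,
    Idem.mul_finprod_mem_eq hΓ.2 _ fun e _ => maxAt_mul_edgeIdem f g e, mul_assoc]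

lemma graphIdem_deltaG (g : G) : graphIdem ψ f (deltaG φ g) = vertexIdem ψ g := by
  rw [graphIdem, deltaG, finprod_mem_insert_of_idem Idem.mul_self (Set.finite_singleton g),
    finprod_mem_singleton, finprod_mem_empty, vertexIdem_one, one_mul, mul_one]

lemma expLift_one : expLift ψ f (1 : FExp φ) = 1 := by
  rw [expLift, FExp.one_graph, FExp.one_elt, graphIdem_deltaG, vertexIdem_one, Idem.val_one,
    maxAt_one, one_mul]

lemma expLift_mxOp (a : FExp φ) : expLift ψ f (mxOp a) = maxAt ψ a.elt := by
  rw [expLift, mxOp, maxElt]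
  dsimp only
  rw [graphIdem_deltaG, val_vertexIdem, mul_inv_self_mul]

lemma mx_expLift (a : FExp φ) : mx (expLift ψ f a) = maxAt ψ a.elt :=
  mx_idem_mul_classMax (graphIdem ψ f a.graph).2 _

lemma expLift_mul (a b : FExp φ) : expLift ψ f (a * b) = expLift ψ f a * expLift ψ f b := by
  have hb := b.finite.smul a.elt
  calc expLift ψ f (a * b)
      = (graphIdem ψ f a.graph * graphIdem ψ f (a.elt • b.graph) * vertexIdem ψ a.elt).1 *
          maxAt ψ (a.elt * b.elt) := by
        rw [expLift, FExp.mul_graph, FExp.mul_elt, graphIdem_union ψ f a.finite hb,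
          mul_right_comm, graphIdem_mul_vertexIdem ψ f a.finite a.elt_mem]
    _ = (graphIdem ψ f a.graph).1 * (maxAt ψ a.elt * (graphIdem ψ f b.graph).1) *
          maxAt ψ b.elt := by
        rw [maxAt_mul_graphIdem ψ f b.finite, Idem.val_mul, Idem.val_mul, val_vertexIdem]
        simp only [mul_assoc]
        rw [maxAt_mul, mul_assoc]
    _ = expLift ψ f a * expLift ψ f b := by simp only [expLift, mul_assoc]

lemma expLift_inv (a : FExp φ) : expLift ψ f a⁻¹ = (expLift ψ f a)⁻¹ := by
  rw [expLift, expLift, FExp.inv_graph, FExp.inv_elt, InverseMonoid.mul_inv_rev,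
    idem_inv (graphIdem ψ f a.graph).2, maxAt_inv, maxAt_mul_graphIdem ψ f a.finite]

lemma expLift_genElt (hψ : ∀ x, ψ (φ x) = σclass (f x)) (x : X) :
    expLift ψ f (genElt φ x) = f x := by
  have hverts : (genElt φ x).graph.verts = insert 1 {φ x} := by
    simp only [genElt, edgeG, one_mul]
  rw [expLift, graphIdem, hverts, finprod_mem_insert_of_idem Idem.mul_self
    (Set.finite_singleton _), finprod_mem_singleton]
  simp only [genElt, edgeG, finprod_mem_singleton, vertexIdem_one, one_mul, Idem.val_mul,
    val_vertexIdem, val_edgeIdem, maxAt_one, InverseMonoid.inv_one, mul_one]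
  rw [maxAt, hψ, classMax_σclass]
  exact mul_inv_mul_mul_inv_mul_of_nle (nle_mx (sigma_refl _))

theorem isFMorphismExtending_expLift (hψ : ∀ x, ψ (φ x) = σclass (f x)) :
    IsFMorphismExtending f (expLift ψ f (φ := φ)) :=
  ⟨expLift_one ψ f, expLift_mul ψ f, expLift_inv ψ f,
    fun a => by rw [expLift_mxOp, mx_expLift], expLift_genElt ψ f hψ⟩

end Lift

section Generation

open Subgraph

variable {G : Type u} [Group G] {X : Type v} {φ : X → G}

variable (φ) in
inductive Generated : FExp φ → Prop
  | one : Generated 1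
  | gen (x : X) : Generated (genElt φ x)
  | mul {a b : FExp φ} : Generated a → Generated b → Generated (a * b)
  | inv {a : FExp φ} : Generated a → Generated a⁻¹
  | mxOp {a : FExp φ} : Generated a → Generated (mxOp a)

lemma IsFMorphismExtending.eq_of_generated {T : Type w} [FInverseMonoid T] {f : X → T}
    {h h' : FExp φ → T} (hh : IsFMorphismExtending f h) (hh' : IsFMorphismExtending f h')
    {a : FExp φ} (ha : Generated φ a) : h a = h' a := by
  obtain ⟨one, mul, inv, mxo, gen⟩ := hh
  obtain ⟨one', mul', inv', mxo', gen'⟩ := hh'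
  induction ha with
  | one => rw [one, one']
  | gen x => rw [gen, gen']
  | mul _ _ iha ihb => rw [mul, mul', iha, ihb]
  | inv _ ih => rw [inv, inv', ih]
  | mxOp _ ih => rw [mxo, mxo', ih]

lemma generated_maxElt (hφ : Subgroup.closure (Set.range φ) = ⊤) (g : G) :
    Generated φ (maxElt φ g) := by
  have hg : g ∈ Subgroup.closure (Set.range φ) := hφ ▸ Subgroup.mem_top g
  induction hg using Subgroup.closure_induction with
  | mem _ hx =>
    obtain ⟨x, rfl⟩ := hx
    exact Generated.mxOp (Generated.gen x)
  | one =>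
    have h1 : (1 : FExp φ) = maxElt φ 1 := FExp.ext' rfl rfl
    exact h1 ▸ Generated.one
  | mul _ _ _ _ hg hh => exact Generated.mxOp (hg.mul hh)
  | inv _ _ hg => exact Generated.mxOp hg.inv

lemma Generated.of_union {c a b : FExp φ} (hc : Generated φ c) (ha : Generated φ a)
    (hv : b.graph.verts = c.graph.verts ∪ a.graph.verts)
    (he : b.graph.edges = c.graph.edges ∪ a.graph.edges) (helt : b.elt = a.elt) :
    Generated φ b := by
  have hb : c * c⁻¹ * a = b := by
    refine FExp.ext' (Subgraph.ext' ?_ ?_) ?_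
    · simp only [FExp.mul_graph, FExp.inv_graph, FExp.mul_elt, FExp.inv_elt, union_verts,
        smul_verts, Set.image_image, mul_inv_cancel_left, mul_inv_cancel, one_mul, Set.image_id',
        Set.union_self, hv]
    · simp only [FExp.mul_graph, FExp.inv_graph, FExp.mul_elt, FExp.inv_elt, union_edges,
        smul_edges, Set.image_image, mul_inv_cancel_left, mul_inv_cancel, one_mul, Set.image_id',
        Set.union_self, he]
    · rw [FExp.mul_elt, FExp.mul_elt, FExp.inv_elt, mul_inv_cancel, one_mul, helt]
  exact hb ▸ (hc.mul hc.inv).mul ha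

variable (φ) in
def FExp.span (V : Finset G) (E : Finset (G × X)) (g : G) : FExp φ where
  graph :=
    { verts := {1, g} ∪ ↑V ∪ Prod.fst '' ↑E ∪ (fun e => e.1 * φ e.2) '' ↑E
      edges := ↑E
      src_mem := fun e he => Or.inl (Or.inr ⟨e, he, rfl⟩)
      tgt_mem := fun e he => Or.inr ⟨e, he, rfl⟩ }
  elt := g
  finite := ⟨Set.toFinite _, Set.toFinite _⟩
  one_mem := Or.inl (Or.inl (Or.inl (Or.inl rfl)))
  elt_mem := Or.inl (Or.inl (Or.inl (Or.inr rfl)))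

lemma FExp.eq_span (a : FExp φ) :
    a = FExp.span φ a.finite.1.toFinset a.finite.2.toFinset a.elt := by
  refine FExp.ext' (Subgraph.ext' ?_ (by simp [FExp.span])) rfl
  ext v
  simp only [FExp.span, Set.Finite.coe_toFinset, Set.mem_union, Set.mem_insert_iff,
    Set.mem_singleton_iff, Set.mem_image]
  constructor
  · exact fun hv => Or.inl (Or.inl (Or.inr hv))
  · rintro ((((rfl | rfl) | hv) | ⟨e, he, rfl⟩) | ⟨e, he, rfl⟩)
    exacts [a.one_mem, a.elt_mem, hv, a.graph.src_mem e he, a.graph.tgt_mem e he]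

lemma generated_span (hφ : Subgroup.closure (Set.range φ) = ⊤) (V : Finset G)
    (E : Finset (G × X)) (g : G) : Generated φ (FExp.span φ V E g) := by
  classical
  induction E using Finset.induction_on with
  | empty =>
    induction V using Finset.induction_on with
    | empty =>
      have h : FExp.span φ ∅ ∅ g = maxElt φ g :=
        FExp.ext' (Subgraph.ext' (by simp [FExp.span, maxElt, deltaG])
          (by simp [FExp.span, maxElt, deltaG])) rfl
      exact h ▸ generated_maxElt hφ g
    | insert v V _ ih =>
      refine (generated_maxElt hφ v).of_union ih ?_ ?_ rfl
      · ext w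
        simp only [FExp.span, maxElt, deltaG, Finset.coe_insert, Finset.coe_empty, Set.image_empty,
          Set.union_empty, Set.union_insert, Set.mem_insert_iff, Set.mem_union,
          Set.mem_singleton_iff, SetLike.mem_coe]
        tauto
      · simp [FExp.span, maxElt, deltaG]
  | insert e E _ ih =>
    refine ((generated_maxElt hφ e.1).mul (Generated.gen e.2)).of_union ih ?_ ?_ rfl
    · ext w
      simp only [FExp.span, maxElt, deltaG, genElt, edgeG, FExp.mul_graph, union_verts,
        smul_verts, Finset.coe_insert, Set.mem_union, Set.mem_insert_iff, Set.mem_singleton_iff,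
        SetLike.mem_coe, Set.mem_image, exists_eq_or_imp, Prod.exists, exists_and_right,
        exists_eq_right, one_mul, Set.image_mul_left, Set.mem_preimage, inv_mul_eq_iff_eq_mul,
        mul_one]
      tauto
    · ext w
      simp [FExp.span, maxElt, deltaG, genElt, edgeG]

lemma generated_of_closure_eq_top (hφ : Subgroup.closure (Set.range φ) = ⊤) (a : FExp φ) :
    Generated φ a :=
  a.eq_span ▸ generated_span hφ _ _ _

lemma IsFMorphismExtending.unique {T : Type w} [FInverseMonoid T] {f : X → T}
    (hφ : Subgroup.closure (Set.range φ) = ⊤) {h h' : FExp φ → T}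
    (hh : IsFMorphismExtending f h) (hh' : IsFMorphismExtending f h') : h = h' :=
  funext fun a => hh.eq_of_generated hh' (generated_of_closure_eq_top hφ a)

end Generation

/-- `F(FG_X)`, for the free group `FG_X` on `X` (generated via the canonical
inclusion), is a free `X`-generated F-inverse monoid: for every F-inverse monoid `T` and
every map `f : X → T` there is a unique map `F(FG_X) → T` preserving `·`, `⁻¹`, `m`, `1`
and sending `(Γ_x, x)` to `f x` for every `x ∈ X`. -/
theorem statement14 {X : Type v} {T : Type w} [FInverseMonoid T] (f : X → T) :
    ∃ h : FExp (FreeGroup.of : X → FreeGroup X) → T,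
      (h 1 = 1 ∧
       (∀ a b, h (a * b) = h a * h b) ∧
       (∀ a, h a⁻¹ = (h a)⁻¹) ∧
       (∀ a, h (mxOp a) = mx (h a)) ∧
       ∀ x : X, h (genElt FreeGroup.of x) = f x) ∧
      ∀ h' : FExp (FreeGroup.of : X → FreeGroup X) → T,
        (h' 1 = 1 ∧
         (∀ a b, h' (a * b) = h' a * h' b) ∧
         (∀ a, h' a⁻¹ = (h' a)⁻¹) ∧
         (∀ a, h' (mxOp a) = mx (h' a)) ∧
         ∀ x : X, h' (genElt FreeGroup.of x) = f x) → h' = h := by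
  have hlift := isFMorphismExtending_expLift (FreeGroup.lift fun x => σclass (f x)) f
    fun _ => FreeGroup.lift_apply_of
  exact ⟨_, hlift, fun _ hh' =>
    IsFMorphismExtending.unique (FreeGroup.closure_range_of X) hh' hlift⟩

end FInvPaper
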